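/- With φ_N(x) = N^{-1/2} Σ_{|k| ≤ N} e^{ikx₁}e^{−ikx₂} on 𝕋² and S[φ_N](t) = φ_N for all t, one has ‖∫_0^T |S[φ_N](s)|² S[φ_N](s) ds‖_{H^s} = T·‖|φ_N|²φ_N‖_{H^s}, and there is a constant c > 0 (independent of N, T) with T·‖|φ_N|²φ_N‖_{H^s(𝕋²)} ≥ c·T·N^{1+s} for all N ≥ 1, 0 ≤ s. -/

import Mathlib

open Real MeasureTheory

/-- Fourier coefficient on `𝕋²` (functions on `ℝ²`, `2π`-periodic):
`f̂(ξ) = (2π)^{-2} ∫_{[0,2π]²} f(x) e^{-i(ξ₁x₁+ξ₂x₂)} dx`. -/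
noncomputable def fourierCoef2 (f : ℝ × ℝ → ℂ) (ξ : ℤ × ℤ) : ℂ :=
  (((2 * π) ^ 2)⁻¹ : ℝ) * ∫ x in Set.Icc ((0, 0) : ℝ × ℝ) (2 * π, 2 * π),
    f x * Complex.exp (-Complex.I * (((ξ.1 : ℝ) * x.1 + (ξ.2 : ℝ) * x.2 : ℝ) : ℂ))

/-- `H^s(𝕋²)` norm: `‖f‖_{H^s} = ((2π)² Σ_ξ (1+|ξ|²)^s |f̂(ξ)|²)^{1/2}`. -/
noncomputable def HsNorm2 (s : ℝ) (f : ℝ × ℝ → ℂ) : ℝ :=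
  Real.sqrt ((2 * π) ^ 2 *
    ∑' ξ : ℤ × ℤ, (1 + (ξ.1 : ℝ) ^ 2 + (ξ.2 : ℝ) ^ 2) ^ s * ‖fourierCoef2 f ξ‖ ^ 2)

/-- Wang's datum `φ_N(x) = N^{-1/2} Σ_{|k|≤N} e^{ikx₁}e^{-ikx₂}`. -/
noncomputable def phiN (N : ℕ) (x : ℝ × ℝ) : ℂ :=
  ((N : ℝ) ^ (-(1/2 : ℝ)) : ℝ) * ∑ k ∈ Finset.Icc (-(N : ℤ)) (N : ℤ),
    Complex.exp (Complex.I * (((k : ℝ) * x.1 - (k : ℝ) * x.2 : ℝ) : ℂ))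

/-!
With `e_ξ(x) = e^{i ξ·x}` one has `φ_N = N^{-1/2} ∑_{|k| ≤ N} e_{(k,-k)}`, so expanding
`|φ_N|² φ_N = φ_N · conj φ_N · φ_N` gives `N^{-3/2} ∑_{k,l,m} e_{(k-l+m, -(k-l+m))}`: the Fourier
coefficient at `(n, -n)` is `N^{-3/2}` times the number of triples with `k - l + m = n`. For
`3N/4 ≤ n ≤ N` there are at least `(n+1)(N+1) ≥ 3N²/4` of them, so each of these `≈ N/4`
frequencies contributes at least `N^{2s} · N/2` to `‖|φ_N|²φ_N‖²_{H^s}`, which is therefore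
`≥ N^{2+2s}`. Since the integrand does not depend on time, the time integral is `T` times it.
-/

noncomputable def torusChar (ξ : ℤ × ℤ) (x : ℝ × ℝ) : ℂ :=
  Complex.exp (Complex.I * (((ξ.1 : ℝ) * x.1 + (ξ.2 : ℝ) * x.2 : ℝ) : ℂ))

lemma continuous_torusChar (ξ : ℤ × ℤ) : Continuous (torusChar ξ) := by
  unfold torusChar; fun_prop

lemma torusChar_mul (ξ η : ℤ × ℤ) (x : ℝ × ℝ) :
    torusChar ξ x * torusChar η x = torusChar (ξ + η) x := by
  simp only [torusChar, ← Complex.exp_add, Prod.fst_add, Prod.snd_add]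
  push_cast; ring_nf

lemma conj_torusChar (ξ : ℤ × ℤ) (x : ℝ × ℝ) :
    (starRingEnd ℂ) (torusChar ξ x) = torusChar (-ξ) x := by
  simp only [torusChar, ← Complex.exp_conj, map_mul, Complex.conj_I, Complex.conj_ofReal,
    Prod.fst_neg, Prod.snd_neg]
  push_cast; ring_nf

lemma setIntegral_exp_int_mul_Icc_zero_two_pi (m : ℤ) :
    ∫ y in Set.Icc 0 (2 * π), Complex.exp (Complex.I * ((m * y : ℝ) : ℂ)) =
      if m = 0 then ((2 * π : ℝ) : ℂ) else 0 := by
  rw [integral_Icc_eq_integral_Ioc, ← intervalIntegral.integral_of_le (by positivity)]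
  split_ifs with hm
  · simp [hm]
  · have hc : Complex.I * m ≠ 0 := by simp [hm]
    simp_rw [Complex.ofReal_mul, Complex.ofReal_intCast, ← mul_assoc]
    rw [integral_exp_mul_complex hc]
    have h : Complex.exp (Complex.I * m * (2 * π)) = 1 := by
      rw [← Complex.exp_int_mul_two_pi_mul_I m]; ring_nf
    simp [h]

lemma fourierCoef2_torusChar (η ξ : ℤ × ℤ) :
    fourierCoef2 (torusChar η) ξ = if ξ = η then 1 else 0 := by
  have hsplit : ∀ x : ℝ × ℝ, torusChar η x *
      Complex.exp (-Complex.I * (((ξ.1 : ℝ) * x.1 + (ξ.2 : ℝ) * x.2 : ℝ) : ℂ)) =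
      Complex.exp (Complex.I * (((η.1 - ξ.1 : ℤ) : ℝ) * x.1 : ℝ)) *
        Complex.exp (Complex.I * (((η.2 - ξ.2 : ℤ) : ℝ) * x.2 : ℝ)) := by
    intro x
    simp only [torusChar, ← Complex.exp_add]
    push_cast; ring_nf
  rw [fourierCoef2, funext hsplit, Set.Icc_prod_eq, Measure.volume_eq_prod,
    setIntegral_prod_mul (fun a => Complex.exp (Complex.I * (((η.1 - ξ.1 : ℤ) : ℝ) * a : ℝ)))
      (fun b => Complex.exp (Complex.I * (((η.2 - ξ.2 : ℤ) : ℝ) * b : ℝ))),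
    setIntegral_exp_int_mul_Icc_zero_two_pi, setIntegral_exp_int_mul_Icc_zero_two_pi]
  by_cases h : ξ = η
  · subst h
    simp only [sub_self, ↓reduceIte, Complex.ofReal_inv, Complex.ofReal_pow, Complex.ofReal_mul,
      Complex.ofReal_ofNat]
    field_simp
  · have hne : η.1 - ξ.1 ≠ 0 ∨ η.2 - ξ.2 ≠ 0 := by
      contrapose! h; exact Prod.ext (by omega) (by omega)
    rcases hne with h1 | h2 <;> simp [*]

lemma fourierCoef2_const_mul (c : ℂ) (f : ℝ × ℝ → ℂ) (ξ : ℤ × ℤ) :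
    fourierCoef2 (fun x => c * f x) ξ = c * fourierCoef2 f ξ := by
  simp only [fourierCoef2, mul_assoc, integral_const_mul]
  ring

lemma fourierCoef2_finset_sum {ι : Type*} (s : Finset ι) (f : ι → ℝ × ℝ → ℂ)
    (hf : ∀ i ∈ s, Continuous (f i)) (ξ : ℤ × ℤ) :
    fourierCoef2 (fun x => ∑ i ∈ s, f i x) ξ = ∑ i ∈ s, fourierCoef2 (f i) ξ := by
  simp only [fourierCoef2, Finset.sum_mul, ← Finset.mul_sum]
  congr 1
  exact integral_finsetSum _ fun i hi => ((hf i hi).mul (by fun_prop)).integrableOn_Icc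

lemma fourierCoef2_sum_torusChar {ι : Type*} (s : Finset ι) (v : ι → ℤ × ℤ) (ξ : ℤ × ℤ) :
    fourierCoef2 (fun x => ∑ i ∈ s, torusChar (v i) x) ξ = (s.filter (v · = ξ)).card := by
  rw [fourierCoef2_finset_sum _ _ fun i _ => continuous_torusChar (v i)]
  simp [fourierCoef2_torusChar, eq_comm]

lemma HsNorm2_const_mul (s : ℝ) (c : ℂ) (f : ℝ × ℝ → ℂ) :
    HsNorm2 s (fun x => c * f x) = ‖c‖ * HsNorm2 s f := by
  simp only [HsNorm2, fourierCoef2_const_mul, norm_mul, mul_pow ‖c‖, mul_left_comm _ (‖c‖ ^ 2),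
    tsum_mul_left]
  rw [Real.sqrt_mul (sq_nonneg _), Real.sqrt_sq (norm_nonneg c)]

lemma sum_le_HsNorm2_sq {s : ℝ} {f : ℝ × ℝ → ℂ} {u : Finset (ℤ × ℤ)}
    (hf : ∀ ξ ∉ u, fourierCoef2 f ξ = 0) (t : Finset (ℤ × ℤ)) :
    (2 * π) ^ 2 * ∑ ξ ∈ t, (1 + (ξ.1 : ℝ) ^ 2 + (ξ.2 : ℝ) ^ 2) ^ s * ‖fourierCoef2 f ξ‖ ^ 2
      ≤ HsNorm2 s f ^ 2 := by
  have hnonneg : ∀ ξ : ℤ × ℤ,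
      0 ≤ (1 + (ξ.1 : ℝ) ^ 2 + (ξ.2 : ℝ) ^ 2) ^ s * ‖fourierCoef2 f ξ‖ ^ 2 := fun ξ => by positivity
  rw [HsNorm2, Real.sq_sqrt (mul_nonneg (by positivity) (tsum_nonneg hnonneg))]
  gcongr
  exact Summable.sum_le_tsum t (fun ξ _ => hnonneg ξ)
    (summable_of_ne_finset_zero (s := u) fun ξ hξ => by simp [hf ξ hξ])

lemma normSq_mul_sum_torusChar {ι : Type*} (s : Finset ι) (v : ι → ℤ × ℤ) (x : ℝ × ℝ) :
    ((‖∑ a ∈ s, torusChar (v a) x‖ ^ 2 : ℝ) : ℂ) * ∑ a ∈ s, torusChar (v a) x =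
      ∑ t ∈ s ×ˢ s ×ˢ s, torusChar (v t.1 - v t.2.1 + v t.2.2) x := by
  push_cast
  rw [← Complex.mul_conj', map_sum, Finset.sum_mul_sum]
  -- distributing the last factor only afterwards keeps the summation order `(a, b, c)`
  simp only [Finset.sum_mul]
  simp only [Finset.mul_sum, conj_torusChar, torusChar_mul, Finset.sum_product, sub_eq_add_neg]

lemma normSq_ofReal_mul_mul {r : ℝ} (hr : 0 ≤ r) (z : ℂ) :
    ((‖(r : ℂ) * z‖ ^ 2 : ℝ) : ℂ) * (r * z) = ((r ^ 3 : ℝ) : ℂ) * (((‖z‖ ^ 2 : ℝ) : ℂ) * z) := by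
  rw [norm_mul, Complex.norm_real, Real.norm_of_nonneg hr]
  push_cast; ring

lemma phiN_eq_sum_torusChar (N : ℕ) (x : ℝ × ℝ) :
    phiN N x = ((N : ℝ) ^ (-(1/2 : ℝ)) : ℝ) *
      ∑ k ∈ Finset.Icc (-(N : ℤ)) N, torusChar (k, -k) x := by
  simp only [phiN, torusChar, Int.cast_neg, neg_mul, ← sub_eq_add_neg]

lemma fourierCoef2_normSq_mul_phiN (N : ℕ) (ξ : ℤ × ℤ) :
    fourierCoef2 (fun x => ((‖phiN N x‖ ^ 2 : ℝ) : ℂ) * phiN N x) ξ =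
      ((((N : ℝ) ^ (-(1/2 : ℝ))) ^ 3 : ℝ) : ℂ) *
        ((Finset.Icc (-(N : ℤ)) N ×ˢ Finset.Icc (-(N : ℤ)) N ×ˢ Finset.Icc (-(N : ℤ)) N).filter
          fun t => (t.1, -t.1) - (t.2.1, -t.2.1) + (t.2.2, -t.2.2) = ξ).card := by
  simp_rw [phiN_eq_sum_torusChar, normSq_ofReal_mul_mul (Real.rpow_nonneg N.cast_nonneg _),
    normSq_mul_sum_torusChar]
  rw [fourierCoef2_const_mul, fourierCoef2_sum_torusChar]

lemma le_card_filter_sub_add_eq (N n : ℕ) (hn : n ≤ N) :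
    (n + 1) * (N + 1) ≤
      ((Finset.Icc (-(N : ℤ)) N ×ˢ Finset.Icc (-(N : ℤ)) N ×ˢ Finset.Icc (-(N : ℤ)) N).filter
        fun t => t.1 - t.2.1 + t.2.2 = (n : ℤ)).card := by
  calc (n + 1) * (N + 1) = (Finset.Icc (0 : ℤ) n ×ˢ Finset.Icc (-(N : ℤ)) 0).card := by
        rw [Finset.card_product, Int.card_Icc, Int.card_Icc]; congr 1; omega
    _ ≤ _ := by
      refine Finset.card_le_card_of_injOn (fun p => (p.1, p.2, n - p.1 + p.2)) ?_ ?_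
      · intro p hp
        simp only [Finset.coe_product, Set.mem_prod, Finset.coe_Icc, Set.mem_Icc,
          Finset.coe_filter, Finset.mem_product, Finset.mem_Icc, Set.mem_ofPred_eq] at hp ⊢
        omega
      · intro p _ q _ h
        simp only [Prod.mk.injEq] at h
        exact Prod.ext h.1 h.2.1

lemma half_le_norm_fourierCoef2_normSq_mul_phiN_sq {N n : ℕ} (hN : 1 ≤ N) (hn : 3 * N ≤ 4 * n)
    (hnN : n ≤ N) :
    (N : ℝ) / 2 ≤
      ‖fourierCoef2 (fun x => ((‖phiN N x‖ ^ 2 : ℝ) : ℂ) * phiN N x) ((n : ℤ), -(n : ℤ))‖ ^ 2 := by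
  have hN0 : (0 : ℝ) < N := by exact_mod_cast hN
  have hfreq : ∀ t : ℤ × ℤ × ℤ,
      (t.1, -t.1) - (t.2.1, -t.2.1) + (t.2.2, -t.2.2) = ((n : ℤ), -(n : ℤ)) ↔
        t.1 - t.2.1 + t.2.2 = n := fun t => by
    simp only [Prod.ext_iff, Prod.fst_add, Prod.snd_add, Prod.fst_sub, Prod.snd_sub]
    omega
  have hsq : ((N : ℝ) ^ (-(1/2 : ℝ))) ^ 2 = (N : ℝ)⁻¹ := by
    rw [← Real.rpow_mul_natCast hN0.le]; norm_num [Real.rpow_neg_one]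
  rw [fourierCoef2_normSq_mul_phiN, Finset.filter_congr fun t _ => hfreq t, norm_mul,
    Complex.norm_real, Complex.norm_natCast, Real.norm_of_nonneg (by positivity), mul_pow,
    ← pow_mul, show 3 * 2 = 2 * 3 from rfl, pow_mul, hsq, inv_pow, ← div_eq_inv_mul,
    le_div_iff₀ (by positivity)]
  have hcount := (Nat.cast_le (α := ℝ)).mpr (le_card_filter_sub_add_eq N n hnN)
  push_cast at hcount
  rify at hn
  have hC := (show (3 * N ^ 2 / 4 : ℝ) ≤ (n + 1) * (N + 1) by nlinarith).trans hcount
  nlinarith [pow_le_pow_left₀ (by positivity) hC 2]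

lemma fourierCoef2_normSq_mul_phiN_eq_zero {N : ℕ} {ξ : ℤ × ℤ}
    (hξ : ξ ∉ (Finset.Icc (-(N : ℤ)) N ×ˢ Finset.Icc (-(N : ℤ)) N ×ˢ Finset.Icc (-(N : ℤ)) N).image
      fun t => (t.1, -t.1) - (t.2.1, -t.2.1) + (t.2.2, -t.2.2)) :
    fourierCoef2 (fun x => ((‖phiN N x‖ ^ 2 : ℝ) : ℂ) * phiN N x) ξ = 0 := by
  rw [fourierCoef2_normSq_mul_phiN,
    Finset.filter_eq_empty_iff.mpr fun t ht h => hξ (Finset.mem_image.mpr ⟨t, ht, h⟩)]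
  simp

lemma rpow_sq_mul_half_le_weight_mul_norm_fourierCoef2_sq {N n : ℕ} {s : ℝ} (hN : 1 ≤ N)
    (hs : 0 ≤ s) (hn : 3 * N ≤ 4 * n) (hnN : n ≤ N) :
    ((N : ℝ) ^ s) ^ 2 * (N / 2) ≤
      (1 + ((n : ℤ) : ℝ) ^ 2 + ((-(n : ℤ) : ℤ) : ℝ) ^ 2) ^ s *
        ‖fourierCoef2 (fun x => ((‖phiN N x‖ ^ 2 : ℝ) : ℂ) * phiN N x)
          ((n : ℤ), -(n : ℤ))‖ ^ 2 := by
  have hweight : ((N : ℝ) ^ s) ^ 2 ≤ (1 + ((n : ℤ) : ℝ) ^ 2 + ((-(n : ℤ) : ℤ) : ℝ) ^ 2) ^ s := by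
    rw [Real.rpow_pow_comm (Nat.cast_nonneg N)]
    refine Real.rpow_le_rpow (by positivity) ?_ hs
    rify at hn
    push_cast
    nlinarith
  exact mul_le_mul hweight (half_le_norm_fourierCoef2_normSq_mul_phiN_sq hN hn hnN)
    (by positivity) (by positivity)

lemma rpow_one_add_le_HsNorm2_normSq_mul_phiN {N : ℕ} {s : ℝ} (hN : 1 ≤ N) (hs : 0 ≤ s) :
    (N : ℝ) ^ (1 + s) ≤ HsNorm2 s (fun x => ((‖phiN N x‖ ^ 2 : ℝ) : ℂ) * phiN N x) := by
  have hN0 : (0 : ℝ) < N := by exact_mod_cast hN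
  have hsum := sum_le_HsNorm2_sq (s := s)
    (fun _ hξ => fourierCoef2_normSq_mul_phiN_eq_zero (N := N) hξ)
    ((Finset.Icc (N - N / 4) N).image fun n : ℕ => ((n : ℤ), -(n : ℤ)))
  rw [Finset.sum_image fun m _ n _ h => by simpa using congrArg Prod.fst h] at hsum
  have hcount := Finset.card_nsmul_le_sum (Finset.Icc (N - N / 4) N) _ _ fun n hn =>
    rpow_sq_mul_half_le_weight_mul_norm_fourierCoef2_sq hN hs
      (by rw [Finset.mem_Icc] at hn; omega) (Finset.mem_Icc.mp hn).2
  rw [Nat.card_Icc, nsmul_eq_mul] at hcount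
  have hcard : (N : ℝ) ≤ 4 * ((N + 1 - (N - N / 4) : ℕ) : ℝ) := by
    exact_mod_cast (by omega : N ≤ 4 * (N + 1 - (N - N / 4)))
  have hpi : 8 ≤ (2 * π) ^ 2 := by nlinarith [Real.pi_gt_three]
  refine le_of_pow_le_pow_left₀ two_ne_zero (Real.sqrt_nonneg _) (le_trans ?_ hsum)
  calc ((N : ℝ) ^ (1 + s)) ^ 2 = 8 * ((N / 4) * (((N : ℝ) ^ s) ^ 2 * (N / 2))) := by
        rw [Real.rpow_add hN0, Real.rpow_one]; ring
    _ ≤ (2 * π) ^ 2 * ((N + 1 - (N - N / 4) : ℕ) * (((N : ℝ) ^ s) ^ 2 * (N / 2))) := by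
        gcongr; linarith
    _ ≤ _ := mul_le_mul_of_nonneg_left hcount (by positivity)

/-- Since `S[φ_N](s) = φ_N`, one has
`‖∫_0^T |S[φ_N](s)|² S[φ_N](s) ds‖_{H^s} = T‖|φ_N|²φ_N‖_{H^s}`, and there is `c > 0`
(independent of `N`, `T`) with `T‖|φ_N|²φ_N‖_{H^s(𝕋²)} ≥ c·T·N^{1+s}` for `N ≥ 1`, `s ≥ 0`. -/
theorem first_picard_iterate_lower_bound :
    ∃ c > (0 : ℝ), ∀ (N : ℕ) (T s : ℝ), 1 ≤ N → 0 ≤ T → 0 ≤ s →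
      (HsNorm2 s (fun x => ∫ _τ in (0:ℝ)..T, ((‖phiN N x‖ ^ 2 : ℝ) : ℂ) * phiN N x)
          = T * HsNorm2 s (fun x => ((‖phiN N x‖ ^ 2 : ℝ) : ℂ) * phiN N x)) ∧
      c * T * (N : ℝ) ^ (1 + s)
        ≤ T * HsNorm2 s (fun x => ((‖phiN N x‖ ^ 2 : ℝ) : ℂ) * phiN N x) := by
  refine ⟨1, one_pos, fun N T s hN hT hs => ⟨?_, ?_⟩⟩
  · simp only [intervalIntegral.integral_const, sub_zero, Complex.real_smul]
    rw [HsNorm2_const_mul, Complex.norm_real, Real.norm_of_nonneg hT]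
  · rw [one_mul]
    exact mul_le_mul_of_nonneg_left (rpow_one_add_le_HsNorm2_normSq_mul_phiN hN hs) hT
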